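/- arXiv:1609.08059 — 2 statements merged into one kernel-verified Lean document; each statement's English description precedes it below -/
import Mathlib

section
/- Every poly-length-computable function is polynomially bounded: if f :⊆ ℝ^n → ℝ^m is poly-length-computable, then there exists a polynomial P : [0,∞) → [0,∞) such that ‖f(x)‖ ≤ P(‖x‖) for all x ∈ dom f. -/
/-- The length of the curve `y` between times `0` and `t`
(using one-sided derivatives on `[0, ∞)` and the sup norm). -/
noncomputable def curveLen {d : ℕ} (y : ℝ → Fin d → ℝ) (t : ℝ) : ℝ :=
  ∫ u in (0:ℝ)..t, ‖derivWithin y (Set.Ici 0) u‖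

/-- `f :⊆ ℝⁿ → ℝᵐ` with domain `dom` is poly-length-computable. -/
def PolyLengthComputable (n m : ℕ) (dom : Set (Fin n → ℝ))
    (f : (Fin n → ℝ) → Fin m → ℝ) : Prop :=
  ∃ (d : ℕ) (hd : m ≤ d) (p : Fin d → MvPolynomial (Fin d) ℚ)
    (q : Fin d → MvPolynomial (Fin n) ℚ) (Ω : MvPolynomial (Fin 2) ℝ),
    (∀ α μ : ℝ, 0 ≤ α → 0 ≤ μ → 0 ≤ MvPolynomial.eval ![α, μ] Ω) ∧
    ∀ x ∈ dom, ∃ y : ℝ → Fin d → ℝ,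
      (∀ i, y 0 i = MvPolynomial.aeval x (q i)) ∧
      (∀ t : ℝ, 0 ≤ t →
        HasDerivWithinAt y (fun i => MvPolynomial.aeval (y t) (p i)) (Set.Ici 0) t) ∧
      (∀ t : ℝ, 0 ≤ t → ∀ μ : ℝ, 0 ≤ μ →
        MvPolynomial.eval ![‖x‖, μ] Ω ≤ curveLen y t →
        ‖(fun j : Fin m => y t (Fin.castLE hd j)) - f x‖ ≤ Real.exp (-μ)) ∧
      (∀ t : ℝ, 0 ≤ t → t ≤ curveLen y t)

lemma mv_eval_bound {k : ℕ} (P : MvPolynomial (Fin k) ℝ) :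
    ∃ C : ℝ, 0 ≤ C ∧ ∀ x : Fin k → ℝ,
      |MvPolynomial.eval x P| ≤ C * (1 + ‖x‖) ^ P.totalDegree := by
  refine ⟨∑ e ∈ P.support, |P.coeff e|,
    Finset.sum_nonneg (fun _ _ => abs_nonneg _), fun x => ?_⟩
  have h1 : (0:ℝ) ≤ ‖x‖ := norm_nonneg x
  have h2 : (1:ℝ) ≤ 1 + ‖x‖ := by linarith
  rw [MvPolynomial.eval_eq']
  calc |∑ e ∈ P.support, P.coeff e * ∏ i, x i ^ e i|
      ≤ ∑ e ∈ P.support, |P.coeff e * ∏ i, x i ^ e i| := Finset.abs_sum_le_sum_abs _ _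
    _ ≤ ∑ e ∈ P.support, |P.coeff e| * (1 + ‖x‖) ^ P.totalDegree := by
        apply Finset.sum_le_sum
        intro e he
        rw [abs_mul]
        refine mul_le_mul_of_nonneg_left ?_ (abs_nonneg _)
        calc |∏ i, x i ^ e i| ≤ ∏ i, (1 + ‖x‖) ^ e i := by
              rw [Finset.abs_prod]
              refine Finset.prod_le_prod (fun _ _ => abs_nonneg _) (fun i _ => ?_)
              rw [abs_pow]
              refine pow_le_pow_left₀ (abs_nonneg _) ?_ _
              calc |x i| ≤ ‖x‖ := by simpa using norm_le_pi_norm x i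
                _ ≤ 1 + ‖x‖ := by linarith
          _ = (1 + ‖x‖) ^ (∑ i, e i) := by rw [Finset.prod_pow_eq_pow_sum]
          _ ≤ (1 + ‖x‖) ^ P.totalDegree := by
              apply pow_le_pow_right₀ h2
              rw [← Finsupp.sum_fintype e (fun _ n => n) (fun _ => rfl)]
              exact MvPolynomial.le_totalDegree he
    _ = (∑ e ∈ P.support, |P.coeff e|) * (1 + ‖x‖) ^ P.totalDegree := by
        rw [Finset.sum_mul]


/-- Every poly-length-computable function is polynomially bounded. -/
theorem polyLengthComputable_polyBound (n m : ℕ) (dom : Set (Fin n → ℝ))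
    (f : (Fin n → ℝ) → Fin m → ℝ) (hf : PolyLengthComputable n m dom f) :
    ∃ P : Polynomial ℝ, (∀ α : ℝ, 0 ≤ α → 0 ≤ P.eval α) ∧
      ∀ x ∈ dom, ‖f x‖ ≤ P.eval ‖x‖ := by
  classical
  obtain ⟨d, hd, p, q, Ω, hΩpos, hmain⟩ := hf
  -- bounds for the initial-condition polynomials
  choose Cq hCq hq using fun i : Fin d =>
    mv_eval_bound ((q i).map (algebraMap ℚ ℝ))
  set Dq : Fin d → ℕ := fun i => (((q i).map (algebraMap ℚ ℝ))).totalDegree with hDq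
  -- bound for Ω
  obtain ⟨CΩ, hCΩ, hΩb⟩ := mv_eval_bound Ω
  set DΩ := Ω.totalDegree with hDΩ
  -- the final polynomial
  set R : Polynomial ℝ :=
    (∑ i : Fin d, Polynomial.C (Cq i) * (1 + Polynomial.X) ^ (Dq i)) with hR
  set P : Polynomial ℝ :=
    R + Polynomial.C CΩ * (1 + Polynomial.X) ^ DΩ + 1 with hP
  have hRnn : ∀ α : ℝ, 0 ≤ α → 0 ≤ R.eval α := by
    intro α hα
    rw [hR]
    simp only [Polynomial.eval_finset_sum, Polynomial.eval_mul, Polynomial.eval_C,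
      Polynomial.eval_pow, Polynomial.eval_add, Polynomial.eval_one, Polynomial.eval_X]
    exact Finset.sum_nonneg fun i _ =>
      mul_nonneg (hCq i) (pow_nonneg (by linarith) _)
  have hPnn : ∀ α : ℝ, 0 ≤ α → 0 ≤ P.eval α := by
    intro α hα
    rw [hP]
    simp only [Polynomial.eval_add, Polynomial.eval_mul, Polynomial.eval_C,
      Polynomial.eval_pow, Polynomial.eval_one, Polynomial.eval_X]
    have := hRnn α hα
    have : (0:ℝ) ≤ CΩ * (1 + α) ^ DΩ := mul_nonneg hCΩ (pow_nonneg (by linarith) _)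
    positivity
  refine ⟨P, hPnn, fun x hx => ?_⟩
  obtain ⟨y, hy0, hyd, happ, hlen⟩ := hmain x hx
  set α := ‖x‖ with hα
  have hα0 : (0:ℝ) ≤ α := norm_nonneg x
  set ΩV := MvPolynomial.eval ![α, 0] Ω with hΩV
  have hΩV0 : 0 ≤ ΩV := hΩpos α 0 hα0 le_rfl
  -- the derivative function
  set g : ℝ → Fin d → ℝ := fun u => fun i => MvPolynomial.aeval (y u) (p i) with hg
  have ycont : ContinuousOn y (Set.Ici 0) := fun t ht => (hyd t ht).continuousWithinAt
  have gcont : ContinuousOn g (Set.Ici 0) := by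
    rw [hg]
    refine continuousOn_pi.2 fun i => ?_
    have : (fun u => MvPolynomial.aeval (y u) (p i)) =
        (fun v : Fin d → ℝ => MvPolynomial.eval v ((p i).map (algebraMap ℚ ℝ))) ∘ y := by
      funext u
      simp [Function.comp, MvPolynomial.eval_map, MvPolynomial.aeval_def]
    rw [this]
    exact (MvPolynomial.continuous_eval _).comp_continuousOn ycont
  have hderivEq : ∀ u ∈ Set.Ici (0:ℝ), derivWithin y (Set.Ici 0) u = g u := fun u hu =>
    (hyd u hu).derivWithin (uniqueDiffOn_Ici 0 u hu)
  -- the length as an integral of ‖g‖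
  have ngint : MeasureTheory.IntegrableOn (fun u => ‖g u‖) (Set.Icc 0 ΩV) := by
    exact ((gcont.mono (Set.Icc_subset_Ici_self)).norm).integrableOn_compact isCompact_Icc
  set L : ℝ → ℝ := fun t => ∫ u in (0:ℝ)..t, ‖g u‖ with hL
  have hLcurve : ∀ t : ℝ, 0 ≤ t → curveLen y t = L t := by
    intro t ht
    refine intervalIntegral.integral_congr fun u hu => ?_
    have hu0 : (0:ℝ) ≤ u := by
      rcases hu with ⟨h1, _⟩
      simpa [min_eq_left ht] using h1
    rw [hderivEq u hu0]
  have hLcont : ContinuousOn L (Set.Icc 0 ΩV) := by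
    have := intervalIntegral.continuousOn_primitive_interval
      (f := fun u => ‖g u‖) (μ := MeasureTheory.volume) (a := 0) (b := ΩV) ?_
    · simpa [Set.uIcc_of_le hΩV0] using this
    · simpa [Set.uIcc_of_le hΩV0] using ngint
  -- find t with L t = ΩV by IVT
  have hL0 : L 0 = 0 := by simp [hL]
  have hLΩ : ΩV ≤ L ΩV := by
    have := hlen ΩV hΩV0
    rwa [hLcurve ΩV hΩV0] at this
  obtain ⟨t, ht, hLt⟩ : ∃ t ∈ Set.Icc (0:ℝ) ΩV, L t = ΩV := by
    have := intermediate_value_Icc hΩV0 hLcont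
    have hmem : ΩV ∈ Set.Icc (L 0) (L ΩV) := ⟨by rw [hL0]; exact hΩV0, hLΩ⟩
    obtain ⟨t, ht, hLt⟩ := this hmem
    exact ⟨t, ht, hLt⟩
  have ht0 : (0:ℝ) ≤ t := ht.1
  -- approximation bound at time t with μ = 0
  have happt : ‖(fun j : Fin m => y t (Fin.castLE hd j)) - f x‖ ≤ 1 := by
    have := happ t ht0 0 le_rfl (by rw [hLcurve t ht0, hLt])
    simpa using this
  -- FTC: y t - y 0 = ∫ g
  have hftc : (∫ u in (0:ℝ)..t, g u) = y t - y 0 := by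
    refine intervalIntegral.integral_eq_sub_of_hasDeriv_right_of_le ht0
      (ycont.mono (fun u hu => hu.1)) (fun u hu => ?_) ?_
    · exact ((hyd u hu.1.le).hasDerivAt (Ici_mem_nhds hu.1)).hasDerivWithinAt
    · exact (gcont.mono (fun u hu => hu.1)).intervalIntegrable_of_Icc ht0
  have hyt : ‖y t - y 0‖ ≤ ΩV := by
    rw [← hftc, ← hLt]
    exact intervalIntegral.norm_integral_le_integral_norm ht0
  -- bound on ‖y 0‖
  have hy0b : ‖y 0‖ ≤ R.eval α := by
    refine (pi_norm_le_iff_of_nonneg (hRnn α hα0)).2 fun i => ?_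
    have : y 0 i = MvPolynomial.eval x ((q i).map (algebraMap ℚ ℝ)) := by
      rw [hy0 i, MvPolynomial.eval_map, MvPolynomial.aeval_def]
    rw [Real.norm_eq_abs, this]
    calc |MvPolynomial.eval x ((q i).map (algebraMap ℚ ℝ))| ≤ Cq i * (1 + α) ^ Dq i := hq i x
      _ ≤ R.eval α := by
          rw [hR]
          simp only [Polynomial.eval_finset_sum, Polynomial.eval_mul, Polynomial.eval_C,
            Polynomial.eval_pow, Polynomial.eval_add, Polynomial.eval_one, Polynomial.eval_X]
          exact Finset.single_le_sum
            (f := fun i => Cq i * (1 + α) ^ Dq i)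
            (fun j _ => mul_nonneg (hCq j) (pow_nonneg (by linarith) _))
            (Finset.mem_univ i)
  -- bound on ΩV
  have hΩVb : ΩV ≤ CΩ * (1 + α) ^ DΩ := by
    have h1 : ‖(![α, 0] : Fin 2 → ℝ)‖ ≤ α := by
      refine (pi_norm_le_iff_of_nonneg hα0).2 fun i => ?_
      fin_cases i <;> simp [abs_of_nonneg hα0, hα0]
    calc ΩV ≤ |MvPolynomial.eval ![α, 0] Ω| := le_abs_self _
      _ ≤ CΩ * (1 + ‖(![α, 0] : Fin 2 → ℝ)‖) ^ DΩ := hΩb _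
      _ ≤ CΩ * (1 + α) ^ DΩ := by
          refine mul_le_mul_of_nonneg_left ?_ hCΩ
          exact pow_le_pow_left₀ (by positivity) (by linarith) _
  -- ‖y t restricted‖ ≤ ‖y t‖
  have hrestr : ‖(fun j : Fin m => y t (Fin.castLE hd j))‖ ≤ ‖y t‖ := by
    refine (pi_norm_le_iff_of_nonneg (norm_nonneg _)).2 fun j => ?_
    exact norm_le_pi_norm (y t) (Fin.castLE hd j)
  -- final chain
  have h1 : ‖f x‖ ≤ ‖y t‖ + 1 := by
    calc ‖f x‖ = ‖(fun j : Fin m => y t (Fin.castLE hd j)) -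
          ((fun j : Fin m => y t (Fin.castLE hd j)) - f x)‖ := by rw [sub_sub_cancel]
      _ ≤ ‖(fun j : Fin m => y t (Fin.castLE hd j))‖ +
          ‖(fun j : Fin m => y t (Fin.castLE hd j)) - f x‖ := norm_sub_le _ _
      _ ≤ ‖y t‖ + 1 := add_le_add hrestr happt
  have h2 : ‖y t‖ ≤ ‖y 0‖ + ΩV := by
    have := norm_sub_norm_le (y t) (y 0)
    linarith
  calc ‖f x‖ ≤ ‖y 0‖ + ΩV + 1 := by linarith
    _ ≤ R.eval α + CΩ * (1 + α) ^ DΩ + 1 := by linarith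
    _ = P.eval α := by
        rw [hP]
        simp [Polynomial.eval_add, Polynomial.eval_mul, Polynomial.eval_pow]
end

section
/- For any polynomial p : [0,∞) → [0,∞) with rational coefficients, the smooth sign function H_p(x,z) = sgn(x)·z, defined on the domain U_p = {(0,0)} ∪ {(x,z) ∈ ℝ* × ℝ : |z/x| ≤ e^{p(‖(x,z)‖)}} (where ℝ* = ℝ∖{0} and sgn(x) is the sign of x, with sgn(0) = 0), is poly-length-computable. -/
/-!
The curve `(b tanh (a (eᵗ - 1)), tanh (a (eᵗ - 1)), a eᵗ, t, b)` solves a polynomial ODE, and its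
first component tends to `sign a · b` with error at most `|b|` and at most
`2 |b| exp (-2 |a| (eᵗ - 1))`. Its length up to time `t` lies between `t` and
`t + (1 + |b|) c`, where `c = |a| (eᵗ - 1)` is the argument of `tanh`; so the length is governed
by `c`, while `t` is only logarithmic in it. If `|b| ≤ e^{-μ}` there is nothing to prove.
Otherwise the domain condition gives `|a| > e^{-μ - p(‖(a,b)‖)}`, so as long as
`c < μ/2 + ‖(a,b)‖` we get `t ≤ c + μ + p(‖(a,b)‖)`, and the length is bounded by a polynomial in
`‖(a,b)‖` and `μ`; once `c` passes that threshold the error is below `e^{-μ}`.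
-/

open Real

namespace Real

theorem hasDerivAt_tanh (x : ℝ) : HasDerivAt tanh (1 - tanh x ^ 2) x := by
  have h := (hasDerivAt_sinh x).div (hasDerivAt_cosh x) (cosh_pos x).ne'
  rw [show tanh = fun y => sinh y / cosh y from funext tanh_eq_sinh_div_cosh]
  refine h.congr_deriv ?_
  beta_reduce
  field_simp

theorem continuous_tanh : Continuous tanh :=
  continuous_iff_continuousAt.2 fun x => (hasDerivAt_tanh x).continuousAt

theorem tanh_nonneg {x : ℝ} (hx : 0 ≤ x) : 0 ≤ tanh x := by
  rw [tanh_eq_sinh_div_cosh]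
  exact div_nonneg (sinh_nonneg_iff.2 hx) (cosh_pos x).le

theorem one_sub_tanh_le (x : ℝ) : 1 - tanh x ≤ 2 * exp (-(2 * x)) := by
  have hsum : 0 < exp x + exp (-x) := by positivity
  have h1 : 1 - tanh x = 2 * exp (-x) / (exp x + exp (-x)) := by
    rw [tanh_eq]; field_simp; ring
  have h2 : exp (-(2 * x)) = exp (-x) / exp x := by
    rw [← exp_sub]; ring_nf
  rw [h1, h2, mul_div_assoc]
  gcongr
  linarith [exp_pos (-x)]

theorem abs_tanh_mul_sub_sign_le (a s : ℝ) :
    |tanh (a * s) - sign a| ≤ 1 - tanh (|a| * s) := by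
  rcases lt_trichotomy a 0 with ha | rfl | ha
  · rw [sign_of_neg ha, abs_of_neg ha, show a * s = -(-a * s) by ring, tanh_neg,
      show -tanh (-a * s) - -1 = 1 - tanh (-a * s) by ring,
      abs_of_nonneg (sub_nonneg.2 (tanh_lt_one _).le)]
  · simp
  · rw [sign_of_pos ha, abs_of_pos ha, abs_sub_comm,
      abs_of_nonneg (sub_nonneg.2 (tanh_lt_one _).le)]

theorem mul_one_sub_tanh_le_exp_neg {β c μ : ℝ} (hβ : 0 ≤ β) (h : μ + 2 * β ≤ 2 * c) :
    β * (1 - tanh c) ≤ exp (-μ) := by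
  have hβexp : 2 * β ≤ exp (2 * β) := by linarith [add_one_le_exp (2 * β)]
  calc β * (1 - tanh c) ≤ β * (2 * exp (-(2 * c))) :=
        mul_le_mul_of_nonneg_left (one_sub_tanh_le c) hβ
    _ ≤ β * (2 * exp (-(μ + 2 * β))) := by gcongr
    _ = 2 * β * exp (-(2 * β)) * exp (-μ) := by rw [mul_assoc _ (exp _), ← exp_add]; ring_nf
    _ ≤ exp (-μ) := by
        refine mul_le_of_le_one_left (exp_pos _).le ?_
        rwa [exp_neg, ← div_eq_mul_inv, div_le_one (exp_pos _)]

theorem le_of_mul_exp_sub_one_le {a c t K : ℝ} (hK : 0 ≤ K) (hc : 0 ≤ c) (ha : exp (-K) < a)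
    (h : a * (exp t - 1) ≤ c) : t ≤ c + K := by
  have ha0 : 0 < a := (exp_pos _).trans ha
  have hinv : a⁻¹ ≤ exp K := by
    rw [inv_le_comm₀ ha0 (exp_pos K), ← exp_neg]; exact ha.le
  have hexp : exp t - 1 ≤ c * a⁻¹ := by
    rw [← div_eq_mul_inv, le_div_iff₀ ha0, mul_comm]; exact h
  rw [← exp_le_exp, exp_add]
  calc exp t ≤ 1 + c * a⁻¹ := by linarith
    _ ≤ exp K + c * exp K := by gcongr; exact one_le_exp hK
    _ = (1 + c) * exp K := by ring
    _ ≤ exp c * exp K := by gcongr; linarith [add_one_le_exp c]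

end Real

section CurveLength

variable {d : ℕ} {y : ℝ → Fin d → ℝ} {v : ℝ → Fin d → ℝ} {t : ℝ}

theorem curveLen_eq_integral (hy : ∀ u, 0 ≤ u → HasDerivWithinAt y (v u) (Set.Ici 0) u)
    (ht : 0 ≤ t) : curveLen y t = ∫ u in (0 : ℝ)..t, ‖v u‖ := by
  refine intervalIntegral.integral_congr fun u hu => ?_
  rw [Set.uIcc_of_le ht] at hu
  simp only [(hy u hu.1).derivWithin (uniqueDiffOn_Ici 0 u hu.1)]

theorem le_curveLen (hy : ∀ u, 0 ≤ u → HasDerivWithinAt y (v u) (Set.Ici 0) u)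
    (hv : Continuous v) (hv1 : ∀ u, 0 ≤ u → 1 ≤ ‖v u‖) (ht : 0 ≤ t) :
    t ≤ curveLen y t := by
  rw [curveLen_eq_integral hy ht]
  calc t = ∫ _ in (0 : ℝ)..t, (1 : ℝ) := by simp
    _ ≤ ∫ u in (0 : ℝ)..t, ‖v u‖ :=
      intervalIntegral.integral_mono_on ht intervalIntegrable_const
        (hv.norm.intervalIntegrable 0 t) fun u hu => hv1 u hu.1

theorem curveLen_le {g : ℝ → ℝ} (hy : ∀ u, 0 ≤ u → HasDerivWithinAt y (v u) (Set.Ici 0) u)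
    (hv : Continuous v) (hg : Continuous g) (hvg : ∀ u, 0 ≤ u → ‖v u‖ ≤ g u) (ht : 0 ≤ t) :
    curveLen y t ≤ ∫ u in (0 : ℝ)..t, g u := by
  rw [curveLen_eq_integral hy ht]
  exact intervalIntegral.integral_mono_on ht (hv.norm.intervalIntegrable 0 t)
    (hg.intervalIntegrable 0 t) fun u hu => hvg u hu.1

end CurveLength

namespace SmoothSign

open MvPolynomial

noncomputable def field : Fin 5 → MvPolynomial (Fin 5) ℚ :=
  ![X 2 * (X 4 - X 0 * X 1), X 2 * (1 - X 1 ^ 2), X 2, 1, 0]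

noncomputable def init : Fin 5 → MvPolynomial (Fin 2) ℚ :=
  ![0, 0, X 0, 0, X 1]

noncomputable def curve (a b : ℝ) (t : ℝ) : Fin 5 → ℝ :=
  ![b * tanh (a * (exp t - 1)), tanh (a * (exp t - 1)), a * exp t, t, b]

noncomputable def velocity (a b : ℝ) (t : ℝ) : Fin 5 → ℝ :=
  ![b * (a * exp t * (1 - tanh (a * (exp t - 1)) ^ 2)),
    a * exp t * (1 - tanh (a * (exp t - 1)) ^ 2), a * exp t, 1, 0]

theorem curve_zero (x : Fin 2 → ℝ) (i : Fin 5) :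
    curve (x 0) (x 1) 0 i = aeval x (init i) := by
  fin_cases i <;> simp [curve, init]

theorem aeval_field_curve (a b t : ℝ) :
    (fun i => aeval (curve a b t) (field i)) = velocity a b t := by
  funext i
  fin_cases i <;> simp [curve, field, velocity]
  ring

theorem hasDerivAt_curve (a b t : ℝ) : HasDerivAt (curve a b) (velocity a b t) t := by
  have hexp : HasDerivAt (fun t => a * (exp t - 1)) (a * exp t) t :=
    ((hasDerivAt_exp t).sub_const 1).const_mul a
  have htanh : HasDerivAt (fun t => tanh (a * (exp t - 1)))
      (a * exp t * (1 - tanh (a * (exp t - 1)) ^ 2)) t :=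
    ((hasDerivAt_tanh _).comp t hexp).congr_deriv (mul_comm _ _)
  rw [hasDerivAt_pi]
  intro i
  fin_cases i
  · exact htanh.const_mul b
  · exact htanh
  · exact (hasDerivAt_exp t).const_mul a
  · exact hasDerivAt_id t
  · exact hasDerivAt_const t b

theorem continuous_velocity (a b : ℝ) : Continuous (velocity a b) := by
  have := continuous_tanh
  refine continuous_pi fun i => ?_
  fin_cases i <;> simp only [velocity] <;> fun_prop

theorem one_le_norm_velocity (a b t : ℝ) : 1 ≤ ‖velocity a b t‖ := by
  simpa [velocity] using norm_le_pi_norm (velocity a b t) 3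

theorem norm_velocity_le (a b t : ℝ) :
    ‖velocity a b t‖ ≤ 1 + (1 + |b|) * |a| * exp t := by
  have hT : 0 ≤ 1 - tanh (a * (exp t - 1)) ^ 2 := by
    linarith [tanh_sq_lt_one (a * (exp t - 1))]
  have hT1 : 1 - tanh (a * (exp t - 1)) ^ 2 ≤ 1 := by
    linarith [sq_nonneg (tanh (a * (exp t - 1)))]
  have hA : 0 ≤ |a| * exp t := by positivity
  have hAT := mul_le_of_le_one_right hA hT1
  have hbAT := mul_le_mul_of_nonneg_left hAT (abs_nonneg b)
  refine (pi_norm_le_iff_of_nonneg (by positivity)).2 fun i => ?_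
  fin_cases i <;> simp [velocity, abs_of_nonneg hT] <;> nlinarith [abs_nonneg b]

theorem le_curveLen_curve (a b : ℝ) {t : ℝ} (ht : 0 ≤ t) : t ≤ curveLen (curve a b) t :=
  le_curveLen (fun u _ => (hasDerivAt_curve a b u).hasDerivWithinAt) (continuous_velocity a b)
    (fun u _ => one_le_norm_velocity a b u) ht

theorem curveLen_curve_le (a b : ℝ) {t : ℝ} (ht : 0 ≤ t) :
    curveLen (curve a b) t ≤ t + (1 + |b|) * (|a| * (exp t - 1)) := by
  calc curveLen (curve a b) t ≤ ∫ u in (0 : ℝ)..t, (1 + (1 + |b|) * |a| * exp u) :=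
        curveLen_le (fun u _ => (hasDerivAt_curve a b u).hasDerivWithinAt)
          (continuous_velocity a b) (by fun_prop) (fun u _ => norm_velocity_le a b u) ht
    _ = t + (1 + |b|) * (|a| * (exp t - 1)) := by
        simp [intervalIntegral.integral_add, integral_exp]
        ring

theorem abs_curve_sub_smoothSign (a b t : ℝ) :
    |curve a b t 0 - sign a * b| = |b| * |tanh (a * (exp t - 1)) - sign a| := by
  rw [← abs_mul, mul_sub]
  simp only [curve, Matrix.cons_val_zero]
  ring_nf

theorem abs_mul_tanh_sub_sign_le_exp_neg {a b t μ α Pα : ℝ} (hb : |b| ≤ α) (hμ : 0 ≤ μ)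
    (hPα : 0 ≤ Pα) (hba : |b| ≤ |a| * exp Pα) (ht : 0 ≤ t)
    (hlen : 2 * α + 2 * μ + α * μ + α ^ 2 + Pα ≤ curveLen (curve a b) t) :
    |b| * |tanh (a * (exp t - 1)) - sign a| ≤ exp (-μ) := by
  have hs : 0 ≤ exp t - 1 := by linarith [one_le_exp ht]
  set c := |a| * (exp t - 1) with hc_def
  have hc0 : 0 ≤ c := by positivity
  refine (mul_le_mul_of_nonneg_left (abs_tanh_mul_sub_sign_le a _) (abs_nonneg b)).trans ?_
  rw [← hc_def]
  by_cases hbμ : |b| ≤ exp (-μ)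
  · exact (mul_le_of_le_one_right (abs_nonneg b) (by linarith [tanh_nonneg hc0])).trans hbμ
  refine mul_one_sub_tanh_le_exp_neg (abs_nonneg b) ?_
  -- a small argument `c` forces a short curve, contradicting `hlen`
  by_contra! hc
  have ha : exp (-(μ + Pα)) < |a| := by
    rw [neg_add, exp_add, ← lt_div_iff₀ (exp_pos _), div_eq_mul_inv, ← exp_neg, neg_neg]
    linarith
  have htc : t ≤ c + (μ + Pα) := le_of_mul_exp_sub_one_le (by positivity) hc0 ha le_rfl
  have hα : 0 ≤ α := (abs_nonneg b).trans hb
  have hL := curveLen_curve_le a b ht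
  nlinarith [mul_le_mul_of_nonneg_right hb hc0, mul_nonneg hα hμ,
    mul_lt_mul_of_pos_left hc (by positivity : (0 : ℝ) < 2 + α)]

theorem abs_le_mul_of_mem_domain {a b E : ℝ} (hE : 0 ≤ E)
    (h : (a = 0 ∧ b = 0) ∨ (a ≠ 0 ∧ |b / a| ≤ E)) : |b| ≤ |a| * E := by
  rcases h with ⟨-, rfl⟩ | ⟨ha, h⟩
  · simp only [abs_zero]; positivity
  · rwa [abs_div, div_le_iff₀ (abs_pos.2 ha), mul_comm] at h

noncomputable def lengthBound (P : Polynomial ℚ) : MvPolynomial (Fin 2) ℝ :=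
  C 2 * X 0 + C 2 * X 1 + X 0 * X 1 + X 0 ^ 2 + Polynomial.aeval (X 0) P

theorem eval_lengthBound (P : Polynomial ℚ) (α μ : ℝ) :
    eval ![α, μ] (lengthBound P) = 2 * α + 2 * μ + α * μ + α ^ 2 + Polynomial.aeval α P := by
  have h := Polynomial.aeval_algHom_apply ((aeval (R := ℝ) ![α, μ]).restrictScalars ℚ)
    (X 0 : MvPolynomial (Fin 2) ℝ) P
  simp only [AlgHom.coe_restrictScalars', aeval_X, Matrix.cons_val_zero] at h
  simp [lengthBound, h]

end SmoothSign

/-- For any polynomial p : [0,∞) → [0,∞) with rational coefficients, the smooth sign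
function H_p(x,z) = sgn(x)·z on the domain
U_p = {(0,0)} ∪ {(x,z) : x ≠ 0, |z/x| ≤ e^(p(‖(x,z)‖))} is poly-length-computable. -/
theorem smoothSign_polyLengthComputable (P : Polynomial ℚ)
    (hP : ∀ α : ℝ, 0 ≤ α → 0 ≤ Polynomial.aeval α P) :
    PolyLengthComputable 2 1
      ({v : Fin 2 → ℝ | v 0 = 0 ∧ v 1 = 0} ∪
        {v : Fin 2 → ℝ | v 0 ≠ 0 ∧ |v 1 / v 0| ≤ Real.exp (Polynomial.aeval ‖v‖ P)})
      (fun v _ => Real.sign (v 0) * v 1) := by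
  refine ⟨5, by norm_num, SmoothSign.field, SmoothSign.init, SmoothSign.lengthBound P,
    fun α μ hα hμ => ?_, fun x hx => ⟨SmoothSign.curve (x 0) (x 1), SmoothSign.curve_zero x,
      fun t _ => ?_, fun t ht μ hμ hlen => ?_, fun t ht => SmoothSign.le_curveLen_curve _ _ ht⟩⟩
  · rw [SmoothSign.eval_lengthBound]
    exact add_nonneg (by positivity) (hP α hα)
  · rw [SmoothSign.aeval_field_curve]
    exact (SmoothSign.hasDerivAt_curve _ _ t).hasDerivWithinAt
  · rw [SmoothSign.eval_lengthBound] at hlen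
    have hx1 : |x 1| ≤ ‖x‖ := by simpa using norm_le_pi_norm x 1
    have hdom := SmoothSign.abs_le_mul_of_mem_domain (exp_pos _).le hx
    refine (pi_norm_le_iff_of_nonneg (exp_pos _).le).2 fun j => ?_
    rw [Subsingleton.elim j 0]
    exact (SmoothSign.abs_curve_sub_smoothSign _ _ t).trans_le
      (SmoothSign.abs_mul_tanh_sub_sign_le_exp_neg hx1 hμ (hP _ (norm_nonneg x)) hdom ht hlen)
end
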